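/- Suppose Q(r) > 0 for every nonzero r ∈ LC⁺. Then for any A ∈ ℝ⁴: (a) V restricted to LC⁺ attains its global minimum at some point of LC⁺; and (b) there exists a nonzero global minimizer of V on LC⁺ if and only if there exists r ∈ LC⁺ with ⟨A, r⟩ > 0 (i.e. if and only if A does not lie in the closed past lightcone). -/

import Mathlib

open Matrix

/-- The forward lightcone in ℝ⁴. -/
def LCplus : Set (Fin 4 → ℝ) :=
  {r | 0 ≤ r 0 ∧ (r 0) ^ 2 = (r 1) ^ 2 + (r 2) ^ 2 + (r 3) ^ 2}

/-- Minkowski inner product ⟨x, y⟩ = x₀y₀ − x₁y₁ − x₂y₂ − x₃y₃. -/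
def minkDot (x y : Fin 4 → ℝ) : ℝ :=
  x 0 * y 0 - x 1 * y 1 - x 2 * y 2 - x 3 * y 3

/-- The quadratic form associated to a 4×4 matrix. -/
def Q (B : Matrix (Fin 4) (Fin 4) ℝ) (r : Fin 4 → ℝ) : ℝ := r ⬝ᵥ B.mulVec r

/-- The Landau potential. -/
noncomputable def V (B : Matrix (Fin 4) (Fin 4) ℝ) (A : Fin 4 → ℝ) (r : Fin 4 → ℝ) : ℝ :=
  -minkDot A r + (1 / 2) * Q B r

lemma Q_cont (B : Matrix (Fin 4) (Fin 4) ℝ) : Continuous (Q B) := by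
  unfold Q Matrix.mulVec dotProduct; fun_prop

lemma V_cont (B : Matrix (Fin 4) (Fin 4) ℝ) (A : Fin 4 → ℝ) : Continuous (V B A) := by
  unfold V minkDot
  exact Continuous.add (by fun_prop) (continuous_const.mul (Q_cont B))

lemma Q_smul (B : Matrix (Fin 4) (Fin 4) ℝ) (t : ℝ) (r : Fin 4 → ℝ) :
    Q B (t • r) = t ^ 2 * Q B r := by
  unfold Q
  rw [Matrix.mulVec_smul, smul_dotProduct, dotProduct_smul]
  simp [smul_eq_mul]; ring

lemma LC_smul {r : Fin 4 → ℝ} (hr : r ∈ LCplus) {t : ℝ} (ht : 0 ≤ t) : t • r ∈ LCplus := by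
  obtain ⟨h0, h1⟩ := hr
  refine ⟨?_, ?_⟩ <;> simp only [Pi.smul_apply, smul_eq_mul]
  · positivity
  · rw [mul_pow, mul_pow, mul_pow, mul_pow, h1]; ring

lemma LC_closed : IsClosed LCplus := by
  have : LCplus = {r : Fin 4 → ℝ | 0 ≤ r 0} ∩
      {r : Fin 4 → ℝ | (r 0)^2 = (r 1)^2 + (r 2)^2 + (r 3)^2} := rfl
  rw [this]
  exact (isClosed_le continuous_const (continuous_apply 0)).inter
    (isClosed_eq (by fun_prop) (by fun_prop))

lemma V_zero (B : Matrix (Fin 4) (Fin 4) ℝ) (A : Fin 4 → ℝ) : V B A 0 = 0 := by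
  simp [V, minkDot, Q, Matrix.mulVec, dotProduct]

lemma zero_mem : (0 : Fin 4 → ℝ) ∈ LCplus := by
  constructor <;> simp

lemma minkDot_bound (A r : Fin 4 → ℝ) :
    minkDot A r ≤ (|A 0| + |A 1| + |A 2| + |A 3|) * ‖r‖ := by
  have habs : ∀ i, |A i * r i| ≤ |A i| * ‖r‖ := fun i => by
    rw [abs_mul]
    exact mul_le_mul_of_nonneg_left (by simpa using norm_le_pi_norm r i) (abs_nonneg _)
  have h0 := habs 0; have h1 := habs 1; have h2 := habs 2; have h3 := habs 3
  unfold minkDot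
  nlinarith [le_abs_self (A 0 * r 0), neg_abs_le (A 1 * r 1), neg_abs_le (A 2 * r 2),
    neg_abs_le (A 3 * r 3)]

/-- (a) The Landau potential attains its global minimum on LC⁺, and (b) there is
a nonzero global minimizer iff A does not lie in the closed past lightcone. -/
theorem global_min_exists_and_nonzero_iff
    (B : Matrix (Fin 4) (Fin 4) ℝ) (hB : B.IsSymm)
    (hpos : ∀ r ∈ LCplus, r ≠ 0 → 0 < Q B r)
    (A : Fin 4 → ℝ) :
    (∃ r ∈ LCplus, ∀ s ∈ LCplus, V B A r ≤ V B A s) ∧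
    ((∃ r ∈ LCplus, r ≠ 0 ∧ ∀ s ∈ LCplus, V B A r ≤ V B A s) ↔
      ∃ r ∈ LCplus, 0 < minkDot A r) := by
  -- unit sphere piece of the cone
  set K : Set (Fin 4 → ℝ) := LCplus ∩ Metric.sphere 0 1 with hK
  have hKcompact : IsCompact K := by
    refine Metric.isCompact_of_isClosed_isBounded
      (LC_closed.inter (Metric.isClosed_sphere)) ?_
    exact (Metric.isBounded_sphere).subset (Set.inter_subset_right)
  have hKne : K.Nonempty := by
    refine ⟨![1,1,0,0], ⟨⟨by norm_num, by simp [Matrix.cons_val]⟩, ?_⟩⟩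
    simp only [Metric.mem_sphere, dist_zero_right]
    refine le_antisymm ?_ ?_
    · refine (pi_norm_le_iff_of_nonneg zero_le_one).2 fun i => ?_
      fin_cases i <;> simp
    · have := norm_le_pi_norm (![1,1,0,0] : Fin 4 → ℝ) 0
      simpa using this
  obtain ⟨u, huK, humin⟩ := hKcompact.exists_isMinOn hKne (Q_cont B).continuousOn
  set m := Q B u with hm
  have hune : u ≠ 0 := by
    intro h
    have := huK.2
    rw [h] at this
    simp at this
  have hmpos : 0 < m := hpos u huK.1 hune
  -- Q B r ≥ m * ‖r‖^2 on LCplus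
  have hQlow : ∀ r ∈ LCplus, m * ‖r‖ ^ 2 ≤ Q B r := by
    intro r hr
    rcases eq_or_ne r 0 with h | h
    · simp [h, Q, Matrix.mulVec, dotProduct]
    · have hn : 0 < ‖r‖ := norm_pos_iff.2 h
      set v : Fin 4 → ℝ := ‖r‖⁻¹ • r with hv
      have hvK : v ∈ K := by
        refine ⟨LC_smul hr (by positivity), ?_⟩
        simp only [Metric.mem_sphere, dist_zero_right, hv, norm_smul, norm_inv, norm_norm]
        field_simp
      have this : m ≤ Q B v := humin hvK
      have hQv : Q B v = ‖r‖⁻¹ ^ 2 * Q B r := Q_smul B _ r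
      rw [hQv] at this
      have h2 : m * ‖r‖ ^ 2 ≤ ‖r‖⁻¹ ^ 2 * Q B r * ‖r‖ ^ 2 := by nlinarith
      calc m * ‖r‖ ^ 2 ≤ ‖r‖⁻¹ ^ 2 * Q B r * ‖r‖ ^ 2 := h2
        _ = Q B r := by field_simp
  set C := |A 0| + |A 1| + |A 2| + |A 3| with hC
  have hCnn : 0 ≤ C := by positivity
  -- sublevel set
  set K₀ : Set (Fin 4 → ℝ) := {r ∈ LCplus | V B A r ≤ 0} with hK₀
  have h0K₀ : (0 : Fin 4 → ℝ) ∈ K₀ := ⟨zero_mem, le_of_eq (V_zero B A)⟩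
  have hK₀bdd : K₀ ⊆ Metric.closedBall 0 (2 * C / m) := by
    intro r ⟨hrL, hrV⟩
    simp only [Metric.mem_closedBall, dist_zero_right]
    have h1 := hQlow r hrL
    have h2 := minkDot_bound A r
    have hVr : V B A r = -minkDot A r + (1/2) * Q B r := rfl
    rw [← hC] at h2
    have : m * ‖r‖ ^ 2 ≤ 2 * (C * ‖r‖) := by nlinarith
    rw [le_div_iff₀ hmpos]
    nlinarith [norm_nonneg r]
  have hK₀cpt : IsCompact K₀ := by
    refine Metric.isCompact_of_isClosed_isBounded ?_
      (Metric.isBounded_closedBall.subset hK₀bdd)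
    exact LC_closed.inter (isClosed_le (V_cont B A) continuous_const)
  obtain ⟨rm, hrmK, hrmmin⟩ := hK₀cpt.exists_isMinOn ⟨0, h0K₀⟩ (V_cont B A).continuousOn
  have hmin : ∀ s ∈ LCplus, V B A rm ≤ V B A s := by
    intro s hs
    by_cases hVs : V B A s ≤ 0
    · exact hrmmin ⟨hs, hVs⟩
    · calc V B A rm ≤ V B A 0 := hrmmin h0K₀
        _ = 0 := V_zero B A
        _ ≤ V B A s := le_of_lt (not_le.1 hVs)
  refine ⟨⟨rm, hrmK.1, hmin⟩, ?_, ?_⟩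
  · rintro ⟨r, hrL, hrne, hrmin⟩
    refine ⟨r, hrL, ?_⟩
    have h1 : V B A r ≤ 0 := (hrmin 0 zero_mem).trans_eq (V_zero B A)
    have h2 := hpos r hrL hrne
    have : V B A r = -minkDot A r + (1/2) * Q B r := rfl
    linarith
  · rintro ⟨r, hrL, hrd⟩
    have hrne : r ≠ 0 := by
      intro h; rw [h] at hrd; simp [minkDot] at hrd
    have hQr : 0 < Q B r := hpos r hrL hrne
    set t := minkDot A r / Q B r with ht
    have htpos : 0 < t := div_pos hrd hQr
    have htr : t • r ∈ LCplus := LC_smul hrL htpos.le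
    have hVtr : V B A (t • r) < 0 := by
      have hmd : minkDot A (t • r) = t * minkDot A r := by
        simp only [minkDot, Pi.smul_apply, smul_eq_mul]; ring
      have : V B A (t • r) = -(t * minkDot A r) + (1/2) * (t^2 * Q B r) := by
        rw [V, hmd, Q_smul]
      rw [this]
      have htQ : t * Q B r = minkDot A r := div_mul_cancel₀ _ hQr.ne'
      have h2 : t ^ 2 * Q B r = t * minkDot A r := by rw [pow_two, mul_assoc, htQ]
      have h3 : 0 < t * minkDot A r := mul_pos htpos hrd
      linarith
    refine ⟨rm, hrmK.1, ?_, hmin⟩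
    intro h
    have := hmin (t • r) htr
    rw [h, V_zero] at this
    linarith
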